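/- The function t ↦ Φ(-t) - rΦ(-rt) - (φ(t) - φ(rt))/t, for fixed r ∈ [0,1), has derivative with respect to t equal to (φ(t) - φ(rt))/t², which is nonpositive for t > 0; consequently the function is nonnegative for all t > 0 since its limit as t → ∞ is 0. -/

import Mathlib

open Filter MeasureTheory

/-- The standard normal density. -/
noncomputable def stdGaussPDF (t : ℝ) : ℝ := Real.exp (-t ^ 2 / 2) / Real.sqrt (2 * Real.pi)

/-- The standard normal cumulative distribution function. -/
noncomputable def stdGaussCDF (x : ℝ) : ℝ := ∫ t in Set.Iic x, stdGaussPDF t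

lemma stdGaussPDF_pos (t : ℝ) : 0 < stdGaussPDF t := by
  unfold stdGaussPDF
  positivity

lemma stdGaussPDF_neg (t : ℝ) : stdGaussPDF (-t) = stdGaussPDF t := by
  simp [stdGaussPDF, neg_sq]

lemma sqrt_two_pi_pos : 0 < Real.sqrt (2 * Real.pi) :=
  Real.sqrt_pos.2 (by positivity)

lemma stdGaussPDF_le (t : ℝ) : stdGaussPDF t ≤ 1 / Real.sqrt (2 * Real.pi) := by
  unfold stdGaussPDF
  have h : Real.exp (-t ^ 2 / 2) ≤ 1 := Real.exp_le_one_iff.2 (by nlinarith [sq_nonneg t])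
  exact div_le_div_of_nonneg_right h sqrt_two_pi_pos.le

lemma continuous_stdGaussPDF : Continuous stdGaussPDF := by
  unfold stdGaussPDF
  fun_prop

lemma integrable_stdGaussPDF : Integrable stdGaussPDF := by
  have h : Integrable (fun x : ℝ => Real.exp (-(1/2 : ℝ) * x ^ 2)) :=
    integrable_exp_neg_mul_sq (by norm_num)
  have := h.div_const (Real.sqrt (2 * Real.pi))
  refine this.congr (Eventually.of_forall fun x => ?_)
  simp [stdGaussPDF]; ring_nf

lemma hasDerivAt_stdGaussPDF (t : ℝ) :
    HasDerivAt stdGaussPDF (-t * stdGaussPDF t) t := by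
  have h1 : HasDerivAt (fun s : ℝ => -s ^ 2 / 2) (-t) t := by
    have := ((hasDerivAt_pow 2 t).neg).div_const 2
    exact this.congr_deriv (by ring)
  have h2 := (h1.exp).div_const (Real.sqrt (2 * Real.pi))
  exact h2.congr_deriv (by unfold stdGaussPDF; ring)

lemma hasDerivAt_stdGaussCDF (x : ℝ) :
    HasDerivAt stdGaussCDF (stdGaussPDF x) x := by
  have key : stdGaussCDF = fun y =>
      stdGaussCDF 0 + ∫ t in (0:ℝ)..y, stdGaussPDF t := by
    funext y
    rw [← intervalIntegral.integral_Iic_sub_Iic integrable_stdGaussPDF.integrableOn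
      integrable_stdGaussPDF.integrableOn]
    unfold stdGaussCDF; ring
  rw [key]
  have h2 : HasDerivAt (fun y : ℝ => ∫ t in (0:ℝ)..y, stdGaussPDF t) (stdGaussPDF x) x :=
    intervalIntegral.integral_hasDerivAt_right
      integrable_stdGaussPDF.intervalIntegrable
      continuous_stdGaussPDF.stronglyMeasurable.stronglyMeasurableAtFilter
      continuous_stdGaussPDF.continuousAt
  simpa using h2

lemma tendsto_stdGaussCDF_neg :
    Filter.Tendsto (fun t : ℝ => stdGaussCDF (-t)) atTop (nhds 0) := by
  have h : ∀ t : ℝ, stdGaussCDF (-t)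
      = ∫ x, Set.indicator (Set.Iic (-t)) stdGaussPDF x := by
    intro t
    rw [integral_indicator measurableSet_Iic]; rfl
  simp_rw [h]
  have h0 : (0:ℝ) = ∫ x : ℝ, (0:ℝ) := by simp
  rw [h0]
  apply tendsto_integral_filter_of_dominated_convergence stdGaussPDF
  · exact Eventually.of_forall fun t =>
      (continuous_stdGaussPDF.stronglyMeasurable.indicator measurableSet_Iic).aestronglyMeasurable
  · refine Eventually.of_forall fun t => Eventually.of_forall fun x => ?_
    rw [Real.norm_eq_abs,
      abs_of_nonneg (Set.indicator_nonneg (fun y _ => (stdGaussPDF_pos y).le) x)]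
    exact Set.indicator_le_self' (fun y _ => (stdGaussPDF_pos y).le) x
  · exact integrable_stdGaussPDF
  · refine Eventually.of_forall fun x => ?_
    have : ∀ᶠ t : ℝ in atTop, Set.indicator (Set.Iic (-t)) stdGaussPDF x = 0 := by
      filter_upwards [eventually_gt_atTop (-x)] with t ht
      apply Set.indicator_of_notMem
      simp only [Set.mem_Iic, not_le]
      linarith
    exact Tendsto.congr' (this.mono fun t ht => ht.symm) tendsto_const_nhds

/-- For fixed r ∈ [0,1), the function
F(t) = Φ(-t) - rΦ(-rt) - (φ(t) - φ(rt))/t has derivative (φ(t) - φ(rt))/t² at every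
t > 0, which is nonpositive; F is nonnegative on (0,∞); and F(t) → 0 as t → ∞. -/
theorem weight_function_props (r : ℝ) (hr0 : 0 ≤ r) (hr1 : r < 1) :
    (∀ t : ℝ, 0 < t →
      HasDerivAt
        (fun s : ℝ =>
          stdGaussCDF (-s) - r * stdGaussCDF (-(r * s))
            - (stdGaussPDF s - stdGaussPDF (r * s)) / s)
        ((stdGaussPDF t - stdGaussPDF (r * t)) / t ^ 2) t ∧
      (stdGaussPDF t - stdGaussPDF (r * t)) / t ^ 2 ≤ 0 ∧
      0 ≤ stdGaussCDF (-t) - r * stdGaussCDF (-(r * t))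
            - (stdGaussPDF t - stdGaussPDF (r * t)) / t) ∧
    Tendsto
      (fun t : ℝ =>
        stdGaussCDF (-t) - r * stdGaussCDF (-(r * t))
          - (stdGaussPDF t - stdGaussPDF (r * t)) / t) atTop (nhds 0) := by
  set F : ℝ → ℝ := fun s =>
    stdGaussCDF (-s) - r * stdGaussCDF (-(r * s))
      - (stdGaussPDF s - stdGaussPDF (r * s)) / s with hF
  -- pointwise nonpositivity of pdf difference
  have hdiff_nonpos : ∀ t : ℝ, 0 < t → stdGaussPDF t - stdGaussPDF (r * t) ≤ 0 := by
    intro t ht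
    have : stdGaussPDF t ≤ stdGaussPDF (r * t) := by
      unfold stdGaussPDF
      have h : Real.exp (-t ^ 2 / 2) ≤ Real.exp (-(r * t) ^ 2 / 2) := by
        apply Real.exp_le_exp.2
        have hr2 : r ^ 2 ≤ 1 := by nlinarith
        have : (r * t) ^ 2 ≤ t ^ 2 := by nlinarith [sq_nonneg t]
        linarith
      exact div_le_div_of_nonneg_right h sqrt_two_pi_pos.le
    linarith
  -- derivative of F at any t > 0
  have hderiv : ∀ t : ℝ, 0 < t →
      HasDerivAt F ((stdGaussPDF t - stdGaussPDF (r * t)) / t ^ 2) t := by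
    intro t ht
    have hA : HasDerivAt (fun s : ℝ => stdGaussCDF (-s)) (-stdGaussPDF t) t := by
      have := (hasDerivAt_stdGaussCDF (-t)).comp t (hasDerivAt_neg t)
      exact this.congr_deriv (by rw [stdGaussPDF_neg]; ring)
    have hB : HasDerivAt (fun s : ℝ => r * stdGaussCDF (-(r * s)))
        (r * (-(r * stdGaussPDF (r * t)))) t := by
      have hlin : HasDerivAt (fun s : ℝ => -(r * s)) (-r) t := by
        exact ((hasDerivAt_id t).const_mul r).neg.congr_deriv (by simp)
      have := ((hasDerivAt_stdGaussCDF (-(r * t))).comp t hlin).const_mul r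
      refine this.congr_deriv ?_
      rw [stdGaussPDF_neg]; ring
    have hN : HasDerivAt (fun s : ℝ => stdGaussPDF s - stdGaussPDF (r * s))
        (-t * stdGaussPDF t - r * (-(r * t) * stdGaussPDF (r * t))) t := by
      have h1 := hasDerivAt_stdGaussPDF t
      have hlin : HasDerivAt (fun s : ℝ => r * s) r t := by
        simpa using (hasDerivAt_id t).const_mul r
      have h2 := (hasDerivAt_stdGaussPDF (r * t)).comp t hlin
      have := h1.sub h2
      refine this.congr_deriv ?_
      ring
    have hC : HasDerivAt (fun s : ℝ => (stdGaussPDF s - stdGaussPDF (r * s)) / s)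
        (((-t * stdGaussPDF t - r * (-(r * t) * stdGaussPDF (r * t))) * t
          - (stdGaussPDF t - stdGaussPDF (r * t)) * 1) / t ^ 2) t :=
      hN.div (hasDerivAt_id t) (ne_of_gt ht)
    have := (hA.sub hB).sub hC
    refine this.congr_deriv ?_
    field_simp
    ring
  -- nonpositivity of derivative
  have hderiv_nonpos : ∀ t : ℝ, 0 < t →
      (stdGaussPDF t - stdGaussPDF (r * t)) / t ^ 2 ≤ 0 := fun t ht =>
    div_nonpos_of_nonpos_of_nonneg (hdiff_nonpos t ht) (by positivity)
  -- limit of F at atTop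
  have hlim : Tendsto F atTop (nhds 0) := by
    have h1 : Tendsto (fun t : ℝ => stdGaussCDF (-t)) atTop (nhds 0) :=
      tendsto_stdGaussCDF_neg
    have h2 : Tendsto (fun t : ℝ => r * stdGaussCDF (-(r * t))) atTop (nhds 0) := by
      rcases eq_or_lt_of_le hr0 with h | h
      · simpa [← h] using tendsto_const_nhds (x := (0:ℝ)) (f := atTop)
      · have hcomp : Tendsto (fun t : ℝ => r * t) atTop atTop :=
          Tendsto.const_mul_atTop h tendsto_id
        have := (tendsto_stdGaussCDF_neg.comp hcomp).const_mul r
        simpa using this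
    have h3 : Tendsto (fun t : ℝ => (stdGaussPDF t - stdGaussPDF (r * t)) / t)
        atTop (nhds 0) := by
      apply squeeze_zero_norm' (a := fun t : ℝ => (2 / Real.sqrt (2 * Real.pi)) / t)
      · filter_upwards [eventually_gt_atTop (0:ℝ)] with t ht
        rw [norm_div, Real.norm_eq_abs, Real.norm_eq_abs, abs_of_pos ht]
        gcongr
        have b1 := stdGaussPDF_le t
        have b2 := stdGaussPDF_le (r * t)
        have p1 := stdGaussPDF_pos t
        have p2 := stdGaussPDF_pos (r * t)
        have e : 2 / Real.sqrt (2 * Real.pi)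
            = 1 / Real.sqrt (2 * Real.pi) + 1 / Real.sqrt (2 * Real.pi) := by ring
        rw [abs_le]
        constructor <;> [linarith; linarith]
      · exact tendsto_const_nhds.div_atTop tendsto_id
    have := (h1.sub h2).sub h3
    simpa using this
  refine ⟨fun t ht => ⟨hderiv t ht, hderiv_nonpos t ht, ?_⟩, hlim⟩
  -- nonnegativity: F is antitone on [t, ∞) and tends to 0
  have hanti : AntitoneOn F (Set.Ici t) := by
    apply antitoneOn_of_deriv_nonpos (convex_Ici t)
    · intro s hs
      exact (hderiv s (lt_of_lt_of_le ht hs)).continuousAt.continuousWithinAt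
    · intro s hs
      rw [interior_Ici] at hs
      exact (hderiv s (ht.trans hs)).differentiableAt.differentiableWithinAt
    · intro s hs
      rw [interior_Ici] at hs
      rw [(hderiv s (ht.trans hs)).deriv]
      exact hderiv_nonpos s (ht.trans hs)
  have : ∀ᶠ s in atTop, F s ≤ F t := by
    filter_upwards [eventually_ge_atTop t] with s hs
    exact hanti Set.self_mem_Ici hs hs
  exact le_of_tendsto hlim this
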